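/- Selection of extreme stubborn communities: consider an opinion vector ⃗o with both positive and negative entries and ⃗o_i ∈ {−0.5, 0.5} for all i ∈ [n]. If R^{⃗o} = ρ(D(⃗o)^{−1} B(⃗o)) < 1, then by fixing o_i(t) = 0.5 for all t ≥ 0 at exactly those communities i with ⃗o_i = 0.5 (making them stubborn) while letting the remaining communities' opinions evolve freely in [−0.5, 0.5], the Opinion-Dependent Reproduction Number satisfies R^{o(t)} < 1 for all t, and the coupled epidemic–opinion system reaches a healthy state with x(t) → 0. -/

import Mathlib

open Matrix Filter Set

noncomputable section

/-- The modified sign function: `1` if `0 ≤ x`, `-1` otherwise. -/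
def sgnm (x : ℝ) : ℝ := if 0 ≤ x then 1 else -1

/-- Gauge transformation matrix `Φ(o) = diag(sgnm o₁, …, sgnm oₙ)`. -/
def gaugeMat {n : ℕ} (o : Fin n → ℝ) : Matrix (Fin n) (Fin n) ℝ :=
  Matrix.diagonal fun i => sgnm (o i)

/-- Graph Laplacian of a nonnegative adjacency matrix with zero diagonal. -/
def lapOf {n : ℕ} (A : Matrix (Fin n) (Fin n) ℝ) : Matrix (Fin n) (Fin n) ℝ :=
  Matrix.diagonal (fun i => ∑ j, A i j) - A

/-- Irreducibility of a (nonnegative) matrix: between any two indices some power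
has a strictly positive entry. -/
def MatIrreducible {n : ℕ} (M : Matrix (Fin n) (Fin n) ℝ) : Prop :=
  ∀ i j : Fin n, ∃ k : ℕ, 1 ≤ k ∧ 0 < (M ^ k) i j

/-- Spectral radius of a real square matrix, as the largest modulus of a complex
eigenvalue. -/
def specRad {m : Type*} [Fintype m] [DecidableEq m] (A : Matrix m m ℝ) : ℝ :=
  sSup ((fun z : ℂ => ‖z‖) '' spectrum ℂ (A.map (algebraMap ℝ ℂ)))

/-- Spectral abscissa of a real square matrix, as the largest real part of a
complex eigenvalue. -/
def specAbs {m : Type*} [Fintype m] [DecidableEq m] (A : Matrix m m ℝ) : ℝ :=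
  sSup (Complex.re '' spectrum ℂ (A.map (algebraMap ℝ ℂ)))

/-- A real square matrix is Hurwitz if all its (complex) eigenvalues have
negative real part. -/
def IsHurwitz {m : Type*} [Fintype m] [DecidableEq m] (A : Matrix m m ℝ) : Prop :=
  ∀ z ∈ spectrum ℂ (A.map (algebraMap ℝ ℂ)), z.re < 0

/-- The data of the coupled networked SIS epidemic–opinion model over `n`
communities. -/
structure EpiOpModel (n : ℕ) where
  /-- healing rates -/
  δ : Fin n → ℝ
  /-- minimum healing rate -/
  δmin : ℝ
  /-- minimum infection rate -/
  βmin : ℝ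
  /-- unweighted adjacency matrix `Ã` of the (strongly connected) epidemic graph -/
  Atil : Matrix (Fin n) (Fin n) ℝ
  /-- infection matrix `B = [β_ij]` -/
  B : Matrix (Fin n) (Fin n) ℝ
  /-- nonnegative adjacency matrix `Ā_u` of the (strongly connected) opinion graph -/
  Au : Matrix (Fin n) (Fin n) ℝ
  δmin_pos : 0 < δmin
  δ_ge : ∀ i, δmin ≤ δ i
  βmin_pos : 0 < βmin
  Atil_01 : ∀ i j, Atil i j = 0 ∨ Atil i j = 1
  Atil_diag : ∀ i, Atil i i = 0
  B_edge : ∀ i j, Atil i j = 1 → βmin ≤ B i j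
  B_off : ∀ i j, Atil i j = 0 → B i j = 0
  B_irred : MatIrreducible B
  Au_nonneg : ∀ i j, 0 ≤ Au i j
  Au_diag : ∀ i, Au i i = 0
  Au_irred : MatIrreducible Au

namespace EpiOpModel

/-- The state space `[0,1]^n × [−0.5, 0.5]^n`. -/
def InBox {n : ℕ} (_M : EpiOpModel n) (x o : Fin n → ℝ) : Prop :=
  (∀ i, x i ∈ Set.Icc (0:ℝ) 1) ∧ (∀ i, o i ∈ Set.Icc (-(1/2) : ℝ) (1/2))

variable {n : ℕ} (M : EpiOpModel n)

/-- `B_min = β_min Ã`. -/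
def Bmin : Matrix (Fin n) (Fin n) ℝ := M.βmin • M.Atil

/-- `D = diag(δ₁, …, δₙ)`. -/
def Dmax : Matrix (Fin n) (Fin n) ℝ := Matrix.diagonal M.δ

/-- `D_min = δ_min I`. -/
def Dmin : Matrix (Fin n) (Fin n) ℝ := M.δmin • (1 : Matrix (Fin n) (Fin n) ℝ)

/-- Opinion-dependent healing matrix `D(o) = D_min + (D − D_min)(O + 0.5 I)`. -/
def Dmat (o : Fin n → ℝ) : Matrix (Fin n) (Fin n) ℝ :=
  Matrix.diagonal fun i => M.δmin + (M.δ i - M.δmin) * (o i + 1/2)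

/-- Opinion-dependent infection matrix `B(o) = B − (O + 0.5 I)(B − B_min)`. -/
def Bmat (o : Fin n → ℝ) : Matrix (Fin n) (Fin n) ℝ :=
  Matrix.of fun i j => M.B i j - (o i + 1/2) * (M.B i j - M.Bmin i j)

/-- Laplacian `L̄_u` of the opinion adjacency matrix. -/
def Lu : Matrix (Fin n) (Fin n) ℝ := lapOf M.Au

/-- Signed opinion Laplacian `Φ(o) L̄_u Φ(o)`. -/
def Lsgn (o : Fin n → ℝ) : Matrix (Fin n) (Fin n) ℝ :=
  gaugeMat o * M.Lu * gaugeMat o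

/-- Epidemic vector field `ẋ = −D(o)x + (I − X)B(o)x`. -/
def fx (x o : Fin n → ℝ) : Fin n → ℝ :=
  -(M.Dmat o).mulVec x +
    (Matrix.diagonal fun i => 1 - x i).mulVec ((M.Bmat o).mulVec x)

/-- Opinion vector field `ȯ = x − (Φ(o) L̄_u Φ(o) + I) o − 0.5 e`. -/
def fo (x o : Fin n → ℝ) : Fin n → ℝ :=
  x - (M.Lsgn o + 1).mulVec o - (fun _ => (1/2 : ℝ))

/-- Equilibria of the coupled system. -/
def IsEquilibrium (x o : Fin n → ℝ) : Prop := M.fx x o = 0 ∧ M.fo x o = 0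

/-- Trajectories (solutions) of the coupled system. -/
def IsTrajectory (x o : ℝ → Fin n → ℝ) : Prop :=
  ∀ t : ℝ, ∀ i : Fin n,
    HasDerivAt (fun s => x s i) (M.fx (x t) (o t) i) t ∧
    HasDerivAt (fun s => o s i) (M.fo (x t) (o t) i) t

/-- The Opinion-Dependent Reproduction Number `R^o = ρ(D(o)⁻¹ B(o))`. -/
def Rnum (o : Fin n → ℝ) : ℝ := specRad ((M.Dmat o)⁻¹ * M.Bmat o)

/-- `R_max = ρ(D_min⁻¹ B)`. -/
def Rmax : ℝ := specRad (M.Dmin⁻¹ * M.B)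

/-- `R_min = ρ(D⁻¹ B_min)`. -/
def Rmin : ℝ := specRad (M.Dmax⁻¹ * M.Bmin)

/-- `W(o) = −D(o) + B(o)`. -/
def Wmat (o : Fin n → ℝ) : Matrix (Fin n) (Fin n) ℝ := -(M.Dmat o) + M.Bmat o

/-- Jacobian matrix of the coupled system evaluated at a healthy equilibrium
`(0, o)`: block lower triangular with diagonal blocks `W(o)` and
`−(Φ(o) L̄_u Φ(o) + I)`. -/
def JacHealthy (o : Fin n → ℝ) : Matrix (Fin n ⊕ Fin n) (Fin n ⊕ Fin n) ℝ :=
  Matrix.fromBlocks (M.Wmat o) 0 1 (-(M.Lsgn o + 1))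

/-- Lyapunov stability of an equilibrium of the coupled system. -/
def LyapunovStable (xe oe : Fin n → ℝ) : Prop :=
  ∀ ε > 0, ∃ δ > 0, ∀ x o : ℝ → Fin n → ℝ, M.IsTrajectory x o →
    dist (x 0, o 0) (xe, oe) < δ → ∀ t ≥ 0, dist (x t, o t) (xe, oe) < ε

/-- Local exponential stability of an equilibrium of the coupled system. -/
def LocExpStable (xe oe : Fin n → ℝ) : Prop :=
  ∃ δ > 0, ∃ C > 0, ∃ α > 0, ∀ x o : ℝ → Fin n → ℝ, M.IsTrajectory x o →
    dist (x 0, o 0) (xe, oe) < δ →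
    ∀ t ≥ 0, dist (x t, o t) (xe, oe) ≤
      C * Real.exp (-α * t) * dist (x 0, o 0) (xe, oe)

end EpiOpModel

open Topology

/-!
Along the trajectory the state stays in `[0,1]ⁿ × [-1/2,1/2]ⁿ`: the vector field points weakly
into this box, which becomes strict after inflating the box by `c e^{K t}`; then let `c → 0`.
Stubborn opinions equal `⃗o_i = 1/2` and free ones stay `≥ -1/2 = ⃗o_i`, so `⃗o ≤ o(t)`. Since
`D(o)` increases and `B(o)` decreases in `o`, the nonnegative matrix `D(o(t))⁻¹ B(o(t))` lies
entrywise below `A = D(⃗o)⁻¹ B(⃗o)`. Gelfand's formula turns `ρ(A) < 1` into a vector `v ≥ 𝟙`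
with `A v ≤ r v`, `r < 1`. This `v` bounds `R^{o(t)} ≤ r` (Collatz–Wielandt), and it makes
`x ≤ 2 v e^{-α t}` a barrier for `ẋ ≤ (B(⃗o) - D(⃗o)) x`.
-/

section Barrier

lemma mem_Icc_of_forall_mem_Ioo {a b y : ℝ} (h : ∀ c ∈ Ioc (0 : ℝ) 1, y ∈ Ioo (a - c) (b + c)) :
    y ∈ Icc a b := by
  have hc : ∀ ε > 0, min ε 1 ∈ Ioc (0 : ℝ) 1 := fun ε hε => ⟨lt_min hε one_pos, min_le_right _ _⟩
  refine ⟨le_of_forall_pos_lt_add fun ε hε => ?_, le_of_forall_pos_lt_add fun ε hε => ?_⟩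
  · linarith [(h _ (hc ε hε)).1, min_le_left ε 1]
  · linarith [(h _ (hc ε hε)).2, min_le_left ε 1]

theorem HasDerivAt.nonneg_of_le_on_Ioo {f : ℝ → ℝ} {f' a b : ℝ} (hf : HasDerivAt f f' b)
    (hab : a < b) (hle : ∀ s ∈ Ioo a b, f s ≤ f b) : 0 ≤ f' := by
  have hleft : 𝓝[<] b ≤ 𝓝[≠] b := nhdsWithin_mono b fun _ hs => ne_of_lt hs
  refine ge_of_tendsto ((hasDerivAt_iff_tendsto_slope.mp hf).mono_left hleft) ?_
  filter_upwards [Ioo_mem_nhdsLT hab] with s hs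
  rw [slope_def_field]
  exact div_nonneg_of_nonpos (sub_nonpos.mpr (hle s hs)) (sub_nonpos.mpr hs.2.le)

theorem forall_lt_zero_of_barrier {ι : Type*} [Finite ι] {g : ι → ℝ → ℝ} {T : ℝ}
    (hg : ∀ k, Continuous (g k)) (h0 : ∀ k, g k 0 < 0)
    (hcontact : ∀ t ∈ Ioc 0 T, (∀ j, g j t ≤ 0) → ∀ k, g k t = 0 →
      ∃ d < 0, HasDerivAt (g k) d t) :
    ∀ t ∈ Icc 0 T, ∀ k, g k t < 0 := by
  by_contra! hbad
  set S := {t ∈ Icc 0 T | ∃ k, 0 ≤ g k t}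
  have hS : IsClosed S := by
    simp only [S, Set.ofPred_and, Set.ofPred_exists]
    exact isClosed_Icc.inter
      (isClosed_iUnion_of_finite fun k => isClosed_le continuous_const (hg k))
  have hbdd : BddBelow S := ⟨0, fun s hs => hs.1.1⟩
  obtain ⟨⟨hτ0, hτT⟩, k, hk⟩ : sInf S ∈ S :=
    hS.csInf_mem (let ⟨t, ht, k, hk⟩ := hbad; ⟨t, ht, k, hk⟩) hbdd
  set τ := sInf S
  have hτ : 0 < τ := hτ0.lt_of_ne fun h => (h0 k).not_ge (h ▸ hk)
  have before : ∀ s ∈ Ioo 0 τ, ∀ j, g j s < 0 := fun s hs j => by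
    by_contra! h
    exact (csInf_le hbdd ⟨⟨hs.1.le, hs.2.le.trans hτT⟩, j, h⟩).not_gt hs.2
  have hle : ∀ j, g j τ ≤ 0 := fun j =>
    le_of_tendsto (((hg j).tendsto τ).mono_left nhdsWithin_le_nhds)
      (mem_of_superset (Ioo_mem_nhdsLT hτ) fun s hs => (before s hs j).le)
  obtain ⟨d, hd, hgd⟩ := hcontact τ ⟨hτ, hτT⟩ hle k (le_antisymm (hle k) hk)
  exact hd.not_ge (hgd.nonneg_of_le_on_Ioo hτ fun s hs => by
    rw [le_antisymm (hle k) hk]; exact (before s hs k).le)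

theorem forall_mem_Ioo_of_barrier {ι : Type*} [Finite ι] {z : ℝ → ι → ℝ} {a b : ι → ℝ}
    {η η' : ℝ → ℝ} {T : ℝ} (hz : ∀ k, Continuous fun t => z t k)
    (hη : ∀ t, HasDerivAt η (η' t) t) (h0 : ∀ k, z 0 k ∈ Ioo (a k - η 0) (b k + η 0))
    (hlower : ∀ t ∈ Ioc 0 T, (∀ j, z t j ∈ Icc (a j - η t) (b j + η t)) → ∀ k,
      z t k = a k - η t → ∃ d, HasDerivAt (fun s => z s k) d t ∧ -η' t < d)
    (hupper : ∀ t ∈ Ioc 0 T, (∀ j, z t j ∈ Icc (a j - η t) (b j + η t)) → ∀ k,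
      z t k = b k + η t → ∃ d, HasDerivAt (fun s => z s k) d t ∧ d < η' t) :
    ∀ t ∈ Icc 0 T, ∀ k, z t k ∈ Ioo (a k - η t) (b k + η t) := by
  have hηc : Continuous η := continuous_iff_continuousAt.2 fun t => (hη t).continuousAt
  have key := forall_lt_zero_of_barrier (ι := ι ⊕ ι) (T := T)
    (g := Sum.elim (fun k t => a k - η t - z t k) (fun k t => z t k - (b k + η t)))
    (by rintro (k | k) <;> simp only [Sum.elim_inl, Sum.elim_inr] <;> fun_prop)
    (by rintro (k | k) <;> simp only [Sum.elim_inl, Sum.elim_inr] <;> linarith [(h0 k).1, (h0 k).2])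
    (by
      intro t ht hle
      simp only [Sum.forall, Sum.elim_inl, Sum.elim_inr] at hle
      have hbox : ∀ j, z t j ∈ Icc (a j - η t) (b j + η t) := fun j =>
        ⟨by linarith [hle.1 j], by linarith [hle.2 j]⟩
      rintro (k | k) hk <;> simp only [Sum.elim_inl, Sum.elim_inr] at hk ⊢
      · obtain ⟨d, hd, hlt⟩ := hlower t ht hbox k (by linarith)
        exact ⟨_, by linarith, ((hη t).const_sub (a k)).sub hd⟩
      · obtain ⟨d, hd, hlt⟩ := hupper t ht hbox k (by linarith)
        exact ⟨_, by linarith, hd.sub ((hη t).const_add (b k))⟩)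
  simp only [Sum.forall, Sum.elim_inl, Sum.elim_inr] at key
  exact fun t ht k => ⟨by linarith [(key t ht).1 k], by linarith [(key t ht).2 k]⟩

theorem lt_mul_exp_of_metzler {ι : Type*} [Fintype ι] {W : Matrix ι ι ℝ}
    (hW : ∀ i j, i ≠ j → 0 ≤ W i j) {u : ι → ℝ} {μ α : ℝ} (hu : ∀ i, 0 < u i)
    (hWu : ∀ i, (W *ᵥ u) i ≤ -μ * u i) (hα : α < μ) {x x' : ℝ → ι → ℝ}
    (hx : ∀ t i, HasDerivAt (fun s => x s i) (x' t i) t)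
    (hx' : ∀ t, 0 ≤ t → ∀ i, x' t i ≤ (W *ᵥ x t) i) (h0 : ∀ i, x 0 i < u i) :
    ∀ t, 0 ≤ t → ∀ i, x t i < u i * Real.exp (-α * t) := by
  have hE : ∀ t, HasDerivAt (fun s => Real.exp (-α * s)) (-α * Real.exp (-α * t)) t := fun t => by
    simpa [mul_comm] using ((hasDerivAt_id t).const_mul (-α)).exp
  intro t ht
  have key := forall_lt_zero_of_barrier (T := t) (g := fun i s => x s i - u i * Real.exp (-α * s))
    (fun i => (continuous_iff_continuousAt.2 fun s => (hx s i).continuousAt).sub (by fun_prop))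
    (fun i => by simpa using h0 i)
    (by
      intro s hs hle i hi
      set E := Real.exp (-α * s)
      have hxs : ∀ j, x s j ≤ u j * E := fun j => by linarith [hle j]
      have hWx : (W *ᵥ x s) i ≤ E * (W *ᵥ u) i := by
        simp only [mulVec, dotProduct, Finset.mul_sum]
        refine Finset.sum_le_sum fun j _ => ?_
        rcases eq_or_ne i j with rfl | hij
        · rw [show x s i = u i * E by linarith]; ring_nf; rfl
        · nlinarith [hW i j hij, hxs j]
      have hpos : 0 < (μ - α) * (u i * E) := mul_pos (by linarith) (mul_pos (hu i) (Real.exp_pos _))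
      refine ⟨_, ?_, (hx s i).sub ((hE s).const_mul (u i))⟩
      nlinarith [hx' s hs.1.le i, hWu i, Real.exp_pos (-α * s)])
  exact fun i => by linarith [key t ⟨ht, le_rfl⟩ i]

end Barrier

section NonnegMatrix

variable {ι : Type*} [Fintype ι] [DecidableEq ι]

theorem specRad_le_of_mulVec_le {P : Matrix ι ι ℝ} (hP : ∀ i j, 0 ≤ P i j) {v : ι → ℝ}
    (hv : ∀ i, 0 < v i) {r : ℝ} (hr : 0 ≤ r) (hPv : ∀ i, (P *ᵥ v) i ≤ r * v i) :
    specRad P ≤ r := by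
  refine Real.sSup_le ?_ hr
  rintro _ ⟨z, hz, rfl⟩
  rw [← Matrix.spectrum_toLin', ← Module.End.hasEigenvalue_iff_mem_spectrum] at hz
  obtain ⟨w, hw⟩ := hz.exists_hasEigenvector
  have hPw : P.map (algebraMap ℝ ℂ) *ᵥ w = z • w := by
    simpa using hw.apply_eq_smul
  obtain ⟨i₀, hi₀⟩ : ∃ i, w i ≠ 0 := by
    by_contra! h
    exact hw.2 (funext h)
  have : Nonempty ι := ⟨i₀⟩
  -- read the eigenvalue equation at a coordinate maximising `‖w j‖ / v j`
  obtain ⟨i, hi⟩ := Finite.exists_max fun j => ‖w j‖ / v j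
  have hwi : 0 < ‖w i‖ := by
    have := (div_pos (norm_pos_iff.2 hi₀) (hv i₀)).trans_le (hi i₀)
    exact (div_pos_iff_of_pos_right (hv i)).1 this
  have hwj : ∀ j, ‖w j‖ ≤ ‖w i‖ / v i * v j := fun j => (div_le_iff₀ (hv j)).1 (hi j)
  have key : ‖z‖ * ‖w i‖ ≤ r * ‖w i‖ := calc
    ‖z‖ * ‖w i‖ = ‖∑ j, (P i j : ℂ) * w j‖ := by
      rw [← norm_mul, ← smul_eq_mul, ← Pi.smul_apply, ← hPw]; rfl
    _ ≤ ∑ j, P i j * ‖w j‖ := (norm_sum_le _ _).trans_eq (by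
      simp [Complex.norm_real, abs_of_nonneg (hP i _)])
    _ ≤ ∑ j, P i j * (‖w i‖ / v i * v j) :=
      Finset.sum_le_sum fun j _ => mul_le_mul_of_nonneg_left (hwj j) (hP i j)
    _ = ‖w i‖ / v i * (P *ᵥ v) i := by
      simp only [mulVec, dotProduct, Finset.mul_sum]
      exact Finset.sum_congr rfl fun j _ => by ring
    _ ≤ ‖w i‖ / v i * (r * v i) :=
      mul_le_mul_of_nonneg_left (hPv i) (div_nonneg hwi.le (hv i).le)
    _ = r * ‖w i‖ := by field_simp [(hv i).ne']
  exact le_of_mul_le_mul_right key hwi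

theorem exists_pow_rowSum_lt_one {A : Matrix ι ι ℝ} (hA : ∀ i j, 0 ≤ A i j)
    (hρ : specRad A < 1) : ∃ N, ∀ i, ∑ j, (A ^ (N + 1)) i j < 1 := by
  let _ : NormedRing (Matrix ι ι ℂ) := Matrix.linftyOpNormedRing
  let _ : NormedAlgebra ℂ (Matrix ι ι ℂ) := Matrix.linftyOpNormedAlgebra
  set a := A.map (algebraMap ℝ ℂ)
  have hρa : spectralRadius ℂ a < 1 := by
    have hbdd := ((Matrix.finite_spectrum a).image fun z : ℂ => ‖z‖).bddAbove
    refine lt_of_le_of_lt (iSup₂_le fun z hz => ?_) (ENNReal.ofReal_lt_one.2 hρ)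
    rw [← ENNReal.ofReal_coe_nnreal, coe_nnnorm]
    exact ENNReal.ofReal_le_ofReal (le_csSup hbdd ⟨z, hz, rfl⟩)
  obtain ⟨N, hN⟩ := eventually_atTop.1
    ((spectrum.pow_norm_pow_one_div_tendsto_nhds_spectralRadius a).eventually (gt_mem_nhds hρa))
  have hnorm : ‖a ^ (N + 1)‖ < 1 := by
    have h := ENNReal.ofReal_lt_one.1 (hN (N + 1) (Nat.le_succ N))
    rcases (Real.rpow_lt_one_iff (norm_nonneg _)).1 h with h | h | h
    · rw [h.1]; exact one_pos
    · exact absurd h.2 (not_lt.2 (by positivity))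
    · exact h.1
  refine ⟨N, fun i => lt_of_le_of_lt ?_ hnorm⟩
  calc ∑ j, (A ^ (N + 1)) i j = ∑ j, ‖(a ^ (N + 1)) i j‖ := by
        refine Finset.sum_congr rfl fun j _ => ?_
        rw [← Matrix.map_pow, map_apply]
        exact (Complex.norm_of_nonneg (pow_apply_nonneg hA _ i j)).symm
    _ ≤ ‖a ^ (N + 1)‖ := by
        rw [linfty_opNorm_def]
        refine le_of_eq_of_le ?_ (NNReal.coe_le_coe.mpr
          (Finset.le_sup (f := fun i => ∑ j, ‖(a ^ (N + 1)) i j‖₊) (Finset.mem_univ i)))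
        simp

/-- The vector is the truncated Neumann series `∑_{k ≤ N} Aᵏ 𝟙`, with `N` from Gelfand's formula. -/
theorem exists_mulVec_le_mul_of_specRad_lt_one {A : Matrix ι ι ℝ} (hA : ∀ i j, 0 ≤ A i j)
    (hρ : specRad A < 1) :
    ∃ v : ι → ℝ, ∃ r, (∀ i, 1 ≤ v i) ∧ r ∈ Ioo 0 1 ∧ ∀ i, (A *ᵥ v) i ≤ r * v i := by
  obtain ⟨N, hN⟩ := exists_pow_rowSum_lt_one hA hρ
  set v : ι → ℝ := ∑ k ∈ Finset.range (N + 1), (A ^ k) *ᵥ 1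
  have hterm : ∀ k i, 0 ≤ ((A ^ k) *ᵥ 1) i := fun k i =>
    Finset.sum_nonneg fun j _ => by simpa using pow_apply_nonneg hA k i j
  have hv : ∀ i, 1 ≤ v i := fun i => by
    simp only [v, Finset.sum_range_succ', pow_zero, one_mulVec, Finset.sum_apply, Pi.add_apply,
      Pi.one_apply, le_add_iff_nonneg_left]
    exact Finset.sum_nonneg fun k _ => hterm (k + 1) i
  have hAv : A *ᵥ v = v - 1 + (A ^ (N + 1)) *ᵥ 1 := by
    have h := Finset.sum_range_succ' (fun k => (A ^ k) *ᵥ (1 : ι → ℝ)) (N + 1)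
    rw [Finset.sum_range_succ, pow_zero, one_mulVec] at h
    simp only [v, mulVec_sum, mulVec_mulVec, ← pow_succ']
    rw [eq_sub_of_add_eq h.symm]
    abel
  have hlt : ∀ i, (A *ᵥ v) i < 1 * v i := fun i => by
    have := hN i
    rw [hAv, one_mul]
    simp only [Pi.add_apply, Pi.sub_apply, Pi.one_apply, mulVec, dotProduct, mul_one]
    linarith
  have hev : ∀ᶠ r in 𝓝 (1 : ℝ), ∀ i, (A *ᵥ v) i < r * v i :=
    eventually_all.2 fun i =>
      ((continuous_id.mul continuous_const).tendsto 1).eventually (lt_mem_nhds (hlt i))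
  obtain ⟨r, hr, hr01⟩ := ((hev.filter_mono nhdsWithin_le_nhds).and
    (Ioo_mem_nhdsLT zero_lt_one)).exists
  exact ⟨v, r, hv, hr01, fun i => (hr i).le⟩

end NonnegMatrix

namespace EpiOpModel

variable {n : ℕ} (M : EpiOpModel n)

lemma Bmin_apply_nonneg (i j : Fin n) : 0 ≤ M.Bmin i j := by
  rcases M.Atil_01 i j with h | h <;> simp [Bmin, h, M.βmin_pos.le]

lemma Bmin_apply_le (i j : Fin n) : M.Bmin i j ≤ M.B i j := by
  rcases M.Atil_01 i j with h | h
  · simp [Bmin, h, M.B_off i j h]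
  · simpa [Bmin, h] using M.B_edge i j h

lemma B_nonneg (i j : Fin n) : 0 ≤ M.B i j :=
  (M.Bmin_apply_nonneg i j).trans (M.Bmin_apply_le i j)

lemma Dmat_apply_self (o : Fin n → ℝ) (i : Fin n) :
    M.Dmat o i i = M.δmin + (M.δ i - M.δmin) * (o i + 1/2) :=
  diagonal_apply_eq _ i

lemma Bmat_apply (o : Fin n → ℝ) (i j : Fin n) :
    M.Bmat o i j = M.B i j - (o i + 1/2) * (M.B i j - M.Bmin i j) := rfl

lemma fx_apply (x o : Fin n → ℝ) (i : Fin n) :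
    M.fx x o i = -(M.Dmat o i i * x i) + (1 - x i) * ∑ j, M.Bmat o i j * x j := by
  rw [fx, Pi.add_apply, Pi.neg_apply, mulVec_diagonal, Dmat, mulVec_diagonal, diagonal_apply_eq]
  rfl

lemma fo_apply (x o : Fin n → ℝ) (i : Fin n) :
    M.fo x o i = x i - sgnm (o i) * ∑ j, M.Au i j * (|o i| - |o j|) - o i - 1/2 := by
  have hΦ : gaugeMat o *ᵥ o = fun j => |o j| := funext fun j => by
    rw [gaugeMat, mulVec_diagonal, sgnm]
    split_ifs with h
    · rw [one_mul, abs_of_nonneg h]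
    · rw [abs_of_neg (not_le.1 h), neg_one_mul]
  have hL : (M.Lsgn o *ᵥ o) i = sgnm (o i) * ∑ j, M.Au i j * (|o i| - |o j|) := by
    rw [Lsgn, ← mulVec_mulVec, hΦ, ← mulVec_mulVec, gaugeMat, mulVec_diagonal, Lu, lapOf,
      sub_mulVec, Pi.sub_apply, mulVec_diagonal]
    simp only [mulVec, dotProduct, mul_sub, Finset.sum_mul, Finset.sum_sub_distrib]
  simp only [fo, Pi.sub_apply, add_mulVec, one_mulVec, Pi.add_apply, hL]
  ring

variable {M}

lemma δmin_le_Dmat {o : Fin n → ℝ} {i : Fin n} (ho : -(1/2) ≤ o i) : M.δmin ≤ M.Dmat o i i := by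
  rw [Dmat_apply_self]
  nlinarith [M.δ_ge i]

lemma Dmat_le_Dmat {o o' : Fin n → ℝ} {i : Fin n} (h : o i ≤ o' i) :
    M.Dmat o i i ≤ M.Dmat o' i i := by
  simp only [Dmat_apply_self]
  nlinarith [M.δ_ge i]

lemma Bmat_nonneg {o : Fin n → ℝ} {i : Fin n} (ho : o i ≤ 1/2) (j : Fin n) : 0 ≤ M.Bmat o i j := by
  rw [Bmat_apply]
  nlinarith [M.Bmin_apply_le i j, M.Bmin_apply_nonneg i j]

lemma Bmat_le_Bmat {o o' : Fin n → ℝ} {i : Fin n} (h : o i ≤ o' i) (j : Fin n) :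
    M.Bmat o' i j ≤ M.Bmat o i j := by
  simp only [Bmat_apply]
  nlinarith [M.Bmin_apply_le i j]

lemma inv_Dmat_mul_Bmat_apply {o : Fin n → ℝ} (ho : ∀ i, -(1/2) ≤ o i) (i j : Fin n) :
    ((M.Dmat o)⁻¹ * M.Bmat o) i j = (M.Dmat o i i)⁻¹ * M.Bmat o i j := by
  have hinv : (M.Dmat o)⁻¹ = diagonal fun i => (M.δmin + (M.δ i - M.δmin) * (o i + 1/2))⁻¹ := by
    refine inv_eq_left_inv ?_
    rw [Dmat, diagonal_mul_diagonal, ← diagonal_one]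
    refine congrArg diagonal (funext fun i => inv_mul_cancel₀ ?_)
    rw [← Dmat_apply_self]
    exact (M.δmin_pos.trans_le (δmin_le_Dmat (ho i))).ne'
  rw [hinv, diagonal_mul, Dmat_apply_self]

lemma inv_Dmat_mul_Bmat_nonneg {o : Fin n → ℝ} (ho : ∀ i, o i ∈ Icc (-(1/2) : ℝ) (1/2))
    (i j : Fin n) : 0 ≤ ((M.Dmat o)⁻¹ * M.Bmat o) i j := by
  rw [inv_Dmat_mul_Bmat_apply fun i => (ho i).1]
  exact mul_nonneg (inv_nonneg.2 (M.δmin_pos.le.trans (δmin_le_Dmat (ho i).1)))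
    (Bmat_nonneg (ho i).2 j)

lemma inv_Dmat_mul_Bmat_le {o o' : Fin n → ℝ} (ho : ∀ i, o i ∈ Icc (-(1/2) : ℝ) (1/2))
    (ho' : ∀ i, o' i ∈ Icc (-(1/2) : ℝ) (1/2)) (h : o ≤ o') (i j : Fin n) :
    ((M.Dmat o')⁻¹ * M.Bmat o') i j ≤ ((M.Dmat o)⁻¹ * M.Bmat o) i j := by
  rw [inv_Dmat_mul_Bmat_apply fun i => (ho i).1, inv_Dmat_mul_Bmat_apply fun i => (ho' i).1]
  have hD := M.δmin_pos.trans_le (δmin_le_Dmat (ho i).1)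
  exact mul_le_mul (inv_anti₀ hD (Dmat_le_Dmat (h i))) (Bmat_le_Bmat (h i) j)
    (Bmat_nonneg (ho' i).2 j) (inv_nonneg.2 hD.le)

/-- A subinvariant vector of `D(o)⁻¹ B(o)` is subinvariant for the entrywise smaller
`D(o')⁻¹ B(o')`. -/
theorem Rnum_lt_one_of_le {o o' : Fin n → ℝ} (ho : ∀ i, o i ∈ Icc (-(1/2) : ℝ) (1/2))
    (ho' : ∀ i, o' i ∈ Icc (-(1/2) : ℝ) (1/2)) (h : o ≤ o') (hR : M.Rnum o < 1) :
    M.Rnum o' < 1 := by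
  obtain ⟨v, r, hv, hr, hAv⟩ := exists_mulVec_le_mul_of_specRad_lt_one
    (inv_Dmat_mul_Bmat_nonneg ho) hR
  refine (specRad_le_of_mulVec_le (inv_Dmat_mul_Bmat_nonneg ho') (fun i => one_pos.trans_le (hv i))
    hr.1.le fun i => le_trans ?_ (hAv i)).trans_lt hr.2
  simp only [mulVec, dotProduct]
  exact Finset.sum_le_sum fun j _ =>
    mul_le_mul_of_nonneg_right (inv_Dmat_mul_Bmat_le ho ho' h i j) (zero_le_one.trans (hv j))

lemma Wmat_mulVec_apply (o v : Fin n → ℝ) (i : Fin n) :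
    (M.Wmat o *ᵥ v) i = -(M.Dmat o i i * v i) + ∑ j, M.Bmat o i j * v j := by
  rw [Wmat, add_mulVec, neg_mulVec, Pi.add_apply, Pi.neg_apply, Dmat, mulVec_diagonal,
    diagonal_apply_eq]
  rfl

lemma fx_le_Wmat_mulVec {x o o₀ : Fin n → ℝ} (hx : ∀ j, x j ∈ Icc (0 : ℝ) 1)
    (ho : ∀ j, o j ≤ 1/2) (h : o₀ ≤ o) (i : Fin n) : M.fx x o i ≤ (M.Wmat o₀ *ᵥ x) i := by
  rw [fx_apply, Wmat_mulVec_apply]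
  have hS : 0 ≤ ∑ j, M.Bmat o i j * x j :=
    Finset.sum_nonneg fun j _ => mul_nonneg (Bmat_nonneg (ho i) j) (hx j).1
  have hSS : ∑ j, M.Bmat o i j * x j ≤ ∑ j, M.Bmat o₀ i j * x j :=
    Finset.sum_le_sum fun j _ => mul_le_mul_of_nonneg_right (Bmat_le_Bmat (h i) j) (hx j).1
  nlinarith [Dmat_le_Dmat (M := M) (h i), (hx i).1, (hx i).2]

theorem tendsto_zero_of_Rnum_lt_one {o₀ : Fin n → ℝ} (ho₀ : ∀ i, o₀ i ∈ Icc (-(1/2) : ℝ) (1/2))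
    (hR : M.Rnum o₀ < 1) {x o : ℝ → Fin n → ℝ}
    (hx : ∀ t i, HasDerivAt (fun s => x s i) (M.fx (x t) (o t) i) t)
    (hbox : ∀ t, 0 ≤ t → M.InBox (x t) (o t)) (hle : ∀ t, 0 ≤ t → o₀ ≤ o t) :
    Tendsto x atTop (𝓝 0) := by
  obtain ⟨v, r, hv, hr, hAv⟩ := exists_mulVec_le_mul_of_specRad_lt_one
    (inv_Dmat_mul_Bmat_nonneg ho₀) hR
  set μ := M.δmin * (1 - r)
  have hμ : 0 < μ := mul_pos M.δmin_pos (sub_pos.2 hr.2)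
  have hWv : ∀ i, (M.Wmat o₀ *ᵥ v) i ≤ -μ * v i := fun i => by
    have hD := M.δmin_pos.trans_le (δmin_le_Dmat (ho₀ i).1)
    have hBv : ∑ j, M.Bmat o₀ i j * v j =
        M.Dmat o₀ i i * (((M.Dmat o₀)⁻¹ * M.Bmat o₀) *ᵥ v) i := by
      simp only [mulVec, dotProduct, inv_Dmat_mul_Bmat_apply (fun i => (ho₀ i).1), Finset.mul_sum,
        ← mul_assoc, mul_inv_cancel₀ hD.ne', one_mul]
    rw [Wmat_mulVec_apply, hBv]
    have hgap : 0 ≤ (M.Dmat o₀ i i - M.δmin) * (1 - r) * v i :=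
      mul_nonneg (mul_nonneg (sub_nonneg.2 (δmin_le_Dmat (ho₀ i).1)) (sub_pos.2 hr.2).le)
        (zero_le_one.trans (hv i))
    nlinarith [mul_le_mul_of_nonneg_left (hAv i) hD.le]
  set u : Fin n → ℝ := (2 : ℝ) • v
  have hu : ∀ i, u i = 2 * v i := fun i => rfl
  have hdecay := lt_mul_exp_of_metzler (W := M.Wmat o₀) (u := u) (α := μ / 2)
    (fun i j hij => by simpa [Wmat, Dmat, hij] using Bmat_nonneg (ho₀ i).2 j)
    (fun i => by linarith [hu i, hv i])
    (fun i => by rw [mulVec_smul, Pi.smul_apply, smul_eq_mul, hu]; linarith [hWv i])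
    (half_lt_self hμ) hx
    (fun t ht i => fx_le_Wmat_mulVec (hbox t ht).1 (fun j => ((hbox t ht).2 j).2) (hle t ht) i)
    (fun i => by linarith [((hbox 0 le_rfl).1 i).2, hu i, hv i])
  have hexp : Tendsto (fun t : ℝ => Real.exp (-(μ / 2) * t)) atTop (𝓝 0) :=
    Real.tendsto_exp_atBot.comp (tendsto_id.const_mul_atTop_of_neg (by linarith))
  refine tendsto_pi_nhds.2 fun i =>
    squeeze_zero' ?_ ?_ (by simpa only [mul_zero] using hexp.const_mul (u i))
  · filter_upwards [eventually_ge_atTop 0] with t ht using ((hbox t ht).1 i).1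
  · filter_upwards [eventually_ge_atTop 0] with t ht using (hdecay t ht i).le

lemma neg_le_Bmat_mul {η y : ℝ} {o : Fin n → ℝ} {i : Fin n} (hη : η ∈ Icc (0 : ℝ) 1)
    (ho : o i ∈ Icc (-(1/2) - η) (1/2 + η)) (hy : y ∈ Icc (-η) (1 + η)) (j : Fin n) :
    -(2 * η * M.B i j) ≤ M.Bmat o i j * y := by
  have hBm := M.Bmin_apply_le i j
  have hBm0 := M.Bmin_apply_nonneg i j
  have hηB : η * η * M.B i j ≤ η * M.B i j :=
    mul_le_mul_of_nonneg_right (mul_le_of_le_one_right hη.1 hη.2) (M.B_nonneg i j)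
  have hlo : -(η * M.B i j) ≤ M.Bmat o i j := by
    rw [Bmat_apply]
    nlinarith [mul_le_mul_of_nonneg_right (show o i + 1/2 ≤ 1 + η by linarith [ho.2])
      (sub_nonneg.2 hBm), hη.1]
  have hhi : M.Bmat o i j ≤ (1 + η) * M.B i j := by
    rw [Bmat_apply]
    nlinarith [mul_le_mul_of_nonneg_right (show -(o i + 1/2) ≤ η by linarith [ho.1])
      (sub_nonneg.2 hBm), mul_nonneg hη.1 hBm0]
  rcases le_total 0 (M.Bmat o i j) with hb | hb
  · nlinarith [mul_le_mul_of_nonneg_left hy.1 hb, mul_le_mul_of_nonneg_right hhi hη.1]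
  · nlinarith [mul_le_mul_of_nonpos_left hy.2 hb,
      mul_le_mul_of_nonneg_right hlo (by linarith [hη.1] : (0 : ℝ) ≤ 1 + η)]

lemma neg_mul_le_sum_Bmat_mul {η : ℝ} {x o : Fin n → ℝ} {i : Fin n} (hη : η ∈ Icc (0 : ℝ) 1)
    (hx : ∀ j, x j ∈ Icc (-η) (1 + η)) (ho : o i ∈ Icc (-(1/2) - η) (1/2 + η)) :
    -(2 * η * ∑ j, M.B i j) ≤ ∑ j, M.Bmat o i j * x j := by
  rw [Finset.mul_sum, ← Finset.sum_neg_distrib]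
  exact Finset.sum_le_sum fun j _ => neg_le_Bmat_mul hη ho (hx j) j

lemma neg_le_Dmat {η : ℝ} {o : Fin n → ℝ} {i : Fin n} (hη : 0 ≤ η)
    (ho : o i ∈ Icc (-(1/2) - η) (1/2 + η)) : -(M.δ i * η) ≤ M.Dmat o i i := by
  rw [Dmat_apply_self]
  nlinarith [mul_le_mul_of_nonneg_left (show -η ≤ o i + 1/2 by linarith [ho.1])
    (sub_nonneg.2 (M.δ_ge i)), M.δmin_pos]

lemma neg_le_fx_of_eq {η : ℝ} {x o : Fin n → ℝ} {i : Fin n} (hη : η ∈ Icc (0 : ℝ) 1)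
    (hx : ∀ j, x j ∈ Icc (-η) (1 + η)) (ho : o i ∈ Icc (-(1/2) - η) (1/2 + η))
    (hxi : x i = -η) : -((2 * M.δ i + 4 * ∑ j, M.B i j) * η) ≤ M.fx x o i := by
  have hS := neg_mul_le_sum_Bmat_mul (M := M) hη hx ho
  have hB : 0 ≤ ∑ j, M.B i j := Finset.sum_nonneg fun j _ => M.B_nonneg i j
  have hδ := M.δmin_pos.le.trans (M.δ_ge i)
  have hηδ : η * η * M.δ i ≤ η * M.δ i :=
    mul_le_mul_of_nonneg_right (mul_le_of_le_one_right hη.1 hη.2) hδ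
  have hηB : η * η * ∑ j, M.B i j ≤ η * ∑ j, M.B i j :=
    mul_le_mul_of_nonneg_right (mul_le_of_le_one_right hη.1 hη.2) hB
  rw [fx_apply, hxi]
  nlinarith [mul_le_mul_of_nonneg_right (neg_le_Dmat (M := M) hη.1 ho) hη.1,
    mul_le_mul_of_nonneg_left hS (by linarith [hη.1] : (0 : ℝ) ≤ 1 + η)]

lemma fx_le_of_eq {η : ℝ} {x o : Fin n → ℝ} {i : Fin n} (hη : η ∈ Icc (0 : ℝ) 1)
    (hx : ∀ j, x j ∈ Icc (-η) (1 + η)) (ho : o i ∈ Icc (-(1/2) - η) (1/2 + η))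
    (hxi : x i = 1 + η) : M.fx x o i ≤ (2 * M.δ i + 4 * ∑ j, M.B i j) * η := by
  have hS := neg_mul_le_sum_Bmat_mul (M := M) hη hx ho
  have hB : 0 ≤ ∑ j, M.B i j := Finset.sum_nonneg fun j _ => M.B_nonneg i j
  have hδ := M.δmin_pos.le.trans (M.δ_ge i)
  have hηδ : η * η * M.δ i ≤ η * M.δ i :=
    mul_le_mul_of_nonneg_right (mul_le_of_le_one_right hη.1 hη.2) hδ
  have hηB : η * η * ∑ j, M.B i j ≤ η * ∑ j, M.B i j :=
    mul_le_mul_of_nonneg_right (mul_le_of_le_one_right hη.1 hη.2) hB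
  rw [fx_apply, hxi]
  nlinarith [mul_le_mul_of_nonneg_right (neg_le_Dmat (M := M) hη.1 ho)
    (by linarith [hη.1] : (0 : ℝ) ≤ 1 + η), mul_le_mul_of_nonneg_left hS hη.1]

lemma sum_Au_mul_abs_sub_nonneg {o : Fin n → ℝ} {i : Fin n} (h : ∀ j, |o j| ≤ |o i|) :
    0 ≤ ∑ j, M.Au i j * (|o i| - |o j|) :=
  Finset.sum_nonneg fun j _ => mul_nonneg (M.Au_nonneg i j) (sub_nonneg.2 (h j))

lemma fo_nonneg_of_eq {η : ℝ} {x o : Fin n → ℝ} {i : Fin n} (hη : 0 ≤ η)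
    (ho : ∀ j, o j ∈ Icc (-(1/2) - η) (1/2 + η)) (hxi : -η ≤ x i) (hoi : o i = -(1/2) - η) :
    0 ≤ M.fo x o i := by
  have habs : |o i| = 1/2 + η := by rw [hoi, abs_of_neg (by linarith)]; ring
  have hL := sum_Au_mul_abs_sub_nonneg (M := M) (o := o) (i := i) fun j => by
    rw [habs, abs_le]; constructor <;> linarith [(ho j).1, (ho j).2]
  rw [fo_apply, sgnm, if_neg (by linarith)]
  linarith

lemma fo_nonpos_of_eq {η : ℝ} {x o : Fin n → ℝ} {i : Fin n} (hη : 0 ≤ η)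
    (ho : ∀ j, o j ∈ Icc (-(1/2) - η) (1/2 + η)) (hxi : x i ≤ 1 + η) (hoi : o i = 1/2 + η) :
    M.fo x o i ≤ 0 := by
  have habs : |o i| = 1/2 + η := by rw [hoi, abs_of_pos (by linarith)]
  have hL := sum_Au_mul_abs_sub_nonneg (M := M) (o := o) (i := i) fun j => by
    rw [habs, abs_le]; constructor <;> linarith [(ho j).1, (ho j).2]
  rw [fo_apply, sgnm, if_pos (by linarith)]
  linarith

lemma mem_Ioo_of_free_or_frozen {K : ℝ} (hK : 0 < K)
    (hcK : ∀ i, 2 * M.δ i + 4 * ∑ j, M.B i j < K) {x o : ℝ → Fin n → ℝ}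
    (hx : ∀ t i, HasDerivAt (fun s => x s i) (M.fx (x t) (o t) i) t)
    (ho : ∀ i, (∀ t, HasDerivAt (fun s => o s i) (M.fo (x t) (o t) i) t) ∨
      ∀ t, HasDerivAt (fun s => o s i) 0 t)
    (h0 : M.InBox (x 0) (o 0)) {t c : ℝ} (ht : 0 ≤ t) (hc : c ∈ Ioc (0 : ℝ) 1) :
    (∀ i, x t i ∈ Ioo (0 - c) (1 + c)) ∧ ∀ i, o t i ∈ Ioo (-(1/2) - c) (1/2 + c) := by
  have hcont : ∀ k, Continuous fun s => Sum.elim (x s) (o s) k := by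
    rintro (i | i)
    · exact continuous_iff_continuousAt.2 fun s => (hx s i).continuousAt
    · rcases ho i with h | h <;> exact continuous_iff_continuousAt.2 fun s => (h s).continuousAt
  -- the inflation grows at rate `K`, faster than the field pushes outward on the inflated faces
  set η : ℝ → ℝ := fun s => c * Real.exp (K * (s - t))
  have hη : ∀ s, HasDerivAt η (K * η s) s := fun s => by
    have := (((hasDerivAt_id s).sub_const t).const_mul K).exp.const_mul c
    simp only [id, mul_one] at this
    exact this.congr_deriv (by simp only [η]; ring)
  have hηpos : ∀ s, 0 < η s := fun s => mul_pos hc.1 (Real.exp_pos _)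
  have hηle : ∀ s ≤ t, η s ≤ 1 := fun s hs => by
    have : Real.exp (K * (s - t)) ≤ 1 :=
      Real.exp_le_one_iff.2 (mul_nonpos_of_nonneg_of_nonpos hK.le (by linarith))
    nlinarith [hc.1, hc.2]
  have hbox := forall_mem_Ioo_of_barrier (T := t) (z := fun s => Sum.elim (x s) (o s))
    (a := Sum.elim 0 fun _ => -(1/2)) (b := Sum.elim 1 fun _ => 1/2) hcont hη ?_ ?_ ?_
  · simp only [Sum.forall, Sum.elim_inl, Sum.elim_inr, Pi.zero_apply, Pi.one_apply] at hbox
    have hηt : η t = c := by simp [η]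
    exact hηt ▸ hbox t ⟨ht, le_rfl⟩
  · rintro (i | i) <;> simp only [Sum.elim_inl, Sum.elim_inr, Pi.zero_apply, Pi.one_apply]
    · exact ⟨by linarith [(h0.1 i).1, hηpos 0], by linarith [(h0.1 i).2, hηpos 0]⟩
    · exact ⟨by linarith [(h0.2 i).1, hηpos 0], by linarith [(h0.2 i).2, hηpos 0]⟩
  all_goals
    intro s hs hbox
    simp only [Sum.forall, Sum.elim_inl, Sum.elim_inr, Pi.zero_apply, Pi.one_apply,
      zero_sub] at hbox
    obtain ⟨hxb, hob⟩ := hbox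
    have hηs : η s ∈ Icc (0 : ℝ) 1 := ⟨(hηpos s).le, hηle s hs.2⟩
    have hKη : ∀ i, (2 * M.δ i + 4 * ∑ j, M.B i j) * η s < K * η s := fun i =>
      mul_lt_mul_of_pos_right (hcK i) (hηpos s)
    have hKη0 : 0 < K * η s := mul_pos hK (hηpos s)
    rintro (i | i) hk <;> simp only [Sum.elim_inl, Sum.elim_inr, Pi.zero_apply, Pi.one_apply,
      zero_sub] at hk ⊢
  · exact ⟨_, hx s i, by linarith [neg_le_fx_of_eq (M := M) hηs hxb (hob i) hk, hKη i]⟩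
  · rcases ho i with h | h
    · exact ⟨_, h s, by linarith [fo_nonneg_of_eq (M := M) hηs.1 hob (hxb i).1 hk]⟩
    · exact ⟨0, h s, by linarith⟩
  · exact ⟨_, hx s i, by linarith [fx_le_of_eq (M := M) hηs hxb (hob i) hk, hKη i]⟩
  · rcases ho i with h | h
    · exact ⟨_, h s, by linarith [fo_nonpos_of_eq (M := M) hηs.1 hob (hxb i).2 hk]⟩
    · exact ⟨0, h s, by linarith⟩

theorem inBox_of_free_or_frozen {x o : ℝ → Fin n → ℝ}
    (hx : ∀ t i, HasDerivAt (fun s => x s i) (M.fx (x t) (o t) i) t)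
    (ho : ∀ i, (∀ t, HasDerivAt (fun s => o s i) (M.fo (x t) (o t) i) t) ∨
      ∀ t, HasDerivAt (fun s => o s i) 0 t)
    (h0 : M.InBox (x 0) (o 0)) : ∀ t, 0 ≤ t → M.InBox (x t) (o t) := by
  obtain ⟨K, hK⟩ := Finite.exists_le fun i => 2 * M.δ i + 4 * ∑ j, M.B i j
  have hcK : ∀ i, 2 * M.δ i + 4 * ∑ j, M.B i j < |K| + 1 := fun i => by
    linarith [hK i, le_abs_self K]
  intro t ht
  have key := fun c (hc : c ∈ Ioc (0 : ℝ) 1) =>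
    mem_Ioo_of_free_or_frozen (by positivity) hcK hx ho h0 ht hc
  exact ⟨fun i => mem_Icc_of_forall_mem_Ioo fun c hc => (key c hc).1 i,
    fun i => mem_Icc_of_forall_mem_Ioo fun c hc => (key c hc).2 i⟩

end EpiOpModel

theorem extreme_stubborn_selection_general {n : ℕ} (M : EpiOpModel n)
    (ov : Fin n → ℝ) (hov : ∀ i, ov i = -(1/2) ∨ ov i = (1/2))
    (hR : M.Rnum ov < 1)
    (x o : ℝ → Fin n → ℝ)
    (hx : ∀ t : ℝ, ∀ i : Fin n,
      HasDerivAt (fun s => x s i) (M.fx (x t) (o t) i) t)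
    (hstub : ∀ i : Fin n, ov i = (1/2) → ∀ t : ℝ, o t i = (1/2))
    (hfree : ∀ i : Fin n, ov i = -(1/2) → ∀ t : ℝ,
      HasDerivAt (fun s => o s i) (M.fo (x t) (o t) i) t)
    (hbox0 : M.InBox (x 0) (o 0)) :
    (∀ t : ℝ, 0 ≤ t → M.Rnum (o t) < 1) ∧
    Filter.Tendsto x Filter.atTop (nhds 0) := by
  have hbox : ∀ t, 0 ≤ t → M.InBox (x t) (o t) := by
    refine EpiOpModel.inBox_of_free_or_frozen hx
      (fun i => (hov i).imp (hfree i) fun h t => ?_) hbox0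
    rw [show (fun s => o s i) = fun _ => 1/2 from funext (hstub i h)]
    exact hasDerivAt_const t _
  have hov_mem : ∀ i, ov i ∈ Icc (-(1/2) : ℝ) (1/2) := fun i => by
    rcases hov i with h | h <;> norm_num [h]
  have hle : ∀ t, 0 ≤ t → ov ≤ o t := fun t ht i => by
    rcases hov i with h | h
    · exact h ▸ ((hbox t ht).2 i).1
    · rw [h, hstub i h t]
  exact ⟨fun t ht => EpiOpModel.Rnum_lt_one_of_le hov_mem (hbox t ht).2 (hle t ht) hR,
    EpiOpModel.tendsto_zero_of_Rnum_lt_one hov_mem hR hx hbox hle⟩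

/-- Corollary 5, selection of extreme stubborn communities:
let `⃗o` have entries in `{−0.5, 0.5}`, with both values present, and suppose
`R^{⃗o} < 1`.  If the communities `i` with `⃗o_i = 0.5` are made stubborn with
opinion fixed at `0.5` for all time, while the remaining communities' opinions
evolve freely, then `R^{o(t)} < 1` for all `t ≥ 0` and the system reaches a
healthy state, `x(t) → 0`. -/
theorem extreme_stubborn_selection {n : ℕ} (M : EpiOpModel n)
    (ov : Fin n → ℝ) (hov : ∀ i, ov i = -(1/2) ∨ ov i = (1/2))
    (hpos : ∃ i, ov i = (1/2)) (hneg : ∃ i, ov i = -(1/2))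
    (hR : M.Rnum ov < 1)
    (x o : ℝ → Fin n → ℝ)
    (hx : ∀ t : ℝ, ∀ i : Fin n,
      HasDerivAt (fun s => x s i) (M.fx (x t) (o t) i) t)
    (hstub : ∀ i : Fin n, ov i = (1/2) → ∀ t : ℝ, o t i = (1/2))
    (hfree : ∀ i : Fin n, ov i = -(1/2) → ∀ t : ℝ,
      HasDerivAt (fun s => o s i) (M.fo (x t) (o t) i) t)
    (hbox0 : M.InBox (x 0) (o 0)) :
    (∀ t : ℝ, 0 ≤ t → M.Rnum (o t) < 1) ∧
    Filter.Tendsto x Filter.atTop (nhds 0) :=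
  extreme_stubborn_selection_general M ov hov hR x o hx hstub hfree hbox0
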